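/- arXiv:2406.17683 — 2 statements merged into one kernel-verified Lean document; each statement's English description precedes it below -/
import Mathlib

section
/- Let M be a compact Riemannian manifold with weight m, and let L be the lifted generator Lω = (1/2)d*_m ω + ⟨r, ω⟩, where d*_m(gr)=0. Given a closed 1-form ω = df + η with η m-harmonic, let u be the unique smooth solution with m(u)=0 of −Lu = ⟨r, η⟩ − m(⟨r, η⟩), where here L is the Markov generator acting on functions. Then the form η + du is L-harmonic, i.e. d(η+du)=0 and L(η+du) is constant, equal to m(⟨r, η⟩). -/
/-!
STATEMENT 5. Abstract model as before.  `L` is the Markov generator, related to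
the lifted generator `𝕃 ω = ½ d*_m ω + ⟨r, ω⟩` by `L f = 𝕃 (d f)`, and
`d*_m (g r) = 0` (invariance of `m`).  Given a closed 1-form `ω = df + η` with
`η` `m`-harmonic, and `u` the solution of the Poisson equation
`-L u = ⟨r, η⟩ - m(⟨r, η⟩)`, the form `η + du` is `𝕃`-harmonic:
`d(η + du) = 0` and `𝕃(η + du)` is the constant `m(⟨r, η⟩)`.
-/
theorem Lharmonic_correction
    {F Ω Ω2 : Type*} [CommRing F] [Algebra ℝ F]
    [AddCommGroup Ω] [Module ℝ Ω] [AddCommGroup Ω2] [Module ℝ Ω2]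
    (d : F →ₗ[ℝ] Ω) (dd : Ω →ₗ[ℝ] Ω2) (dstarm : Ω →ₗ[ℝ] F)
    (pair : Ω →ₗ[ℝ] Ω →ₗ[ℝ] F) (m : F →ₗ[ℝ] ℝ)
    (r : Ω) (hrinv : dstarm r = 0)
    -- the lifted generator 𝕃ω = ½ d*_m ω + ⟨r, ω⟩
    (𝕃 : Ω →ₗ[ℝ] F)
    (h𝕃 : ∀ ω : Ω, 𝕃 ω = (2:ℝ)⁻¹ • dstarm ω + pair r ω)
    -- the Markov generator L f = ½ d*_m (df) + ⟨r, df⟩ = 𝕃 (d f)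
    (L : F →ₗ[ℝ] F)
    (hLd : ∀ f : F, L f = 𝕃 (d f))
    (hddd : ∀ f : F, dd (d f) = 0)
    -- the m-harmonic part η of a closed form ω = df + η
    (η : Ω) (hηclosed : dd η = 0) (hηharm : dstarm η = 0)
    -- u solves the Poisson equation  -L u = ⟨r, η⟩ - m(⟨r, η⟩)
    (u : F)
    (hu : - L u = pair r η - algebraMap ℝ F (m (pair r η))) :
    dd (η + d u) = 0 ∧ 𝕃 (η + d u) = algebraMap ℝ F (m (pair r η)) := by
  constructor
  · rw [map_add, hηclosed, hddd, add_zero]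
  · have h1 : 𝕃 (η + d u) = pair r η + L u := by
      rw [map_add, h𝕃 η, hηharm, smul_zero, zero_add, hLd]
    have h2 : L u = algebraMap ℝ F (m (pair r η)) - pair r η := by
      have := hu
      linear_combination -this
    rw [h1, h2]
    ring
end

section
/- The rotation number h̄ of the non-reversible current m r coincides with the rotation number of the typical current j_m, i.e. for every cohomology class c with m-harmonic representative η_c, j_m(η_c) = m(⟨r, η_c⟩) = ⟨h̄, c⟩. -/
/-!
STATEMENT 11. Abstract model as before.  The typical current at the invariant
measure is `j_m(ω) = m(½ d*ω + ⟨b, ω⟩)`.  For every `m`-harmonic representative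
`η_c` (i.e. `dη_c = 0` and `d*_m η_c = 0`) one has
`j_m(η_c) = m(⟨r, η_c⟩)`, and hence `j_m(η_c) = ⟨h̄, c⟩` for the rotation
number `h̄` of `m r` (which is defined by `⟨h̄, c⟩ = m(⟨r, η_c⟩)`); the second
equality is stated for any functional `hbar` on closed forms defining `h̄`.
-/
theorem rotation_number_of_typical_current
    {F Ω Ω2 : Type*} [CommRing F] [Algebra ℝ F]
    [AddCommGroup Ω] [Module ℝ Ω] [AddCommGroup Ω2] [Module ℝ Ω2]
    (d : F →ₗ[ℝ] Ω) (dd : Ω →ₗ[ℝ] Ω2) (dstar dstarm : Ω →ₗ[ℝ] F)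
    (pair : Ω →ₗ[ℝ] Ω →ₗ[ℝ] F) (m : F →ₗ[ℝ] ℝ)
    (V : F) (b : Ω)
    -- d*_m ω = d*ω - ⟨∇V, ω⟩
    (hdstarm : ∀ ω : Ω, dstarm ω = dstar ω - pair (d V) ω)
    (hpair_symm : ∀ ω ω' : Ω, pair ω ω' = pair ω' ω)
    -- r = b + ½ ∇V
    (r : Ω) (hr : r = b + (2:ℝ)⁻¹ • d V)
    -- h̄ as a functional on closed forms: ⟨h̄,c⟩ = m(⟨r, η_c⟩)
    (hbar : Ω → ℝ)
    (hhbar : ∀ η : Ω, dd η = 0 → dstarm η = 0 → hbar η = m (pair r η))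
    -- η is the m-harmonic representative η_c of a class c
    (η : Ω) (hηclosed : dd η = 0) (hηharm : dstarm η = 0) :
    m ((2:ℝ)⁻¹ • dstar η + pair b η) = m (pair r η)
    ∧ m ((2:ℝ)⁻¹ • dstar η + pair b η) = hbar η := by
  have hds : dstar η = pair (d V) η := by
    have := hdstarm η
    rw [hηharm] at this
    exact (sub_eq_zero.mp this.symm)
  have key : (2:ℝ)⁻¹ • dstar η + pair b η = pair r η := by
    rw [hr, map_add, LinearMap.add_apply, map_smul, LinearMap.smul_apply, hds]
    abel
  exact ⟨by rw [key], by rw [key, hhbar η hηclosed hηharm]⟩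
end
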